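/- arXiv:2408.08557 — 2 statements merged into one kernel-verified Lean document; each statement's English description precedes it below -/
import Mathlib

section
/- Let φ be an LTL∨PSL formula, D = (I⁺, I⁻) a partition of the set I of subformulae of φ of the form s ≼ s', and suppose M, σ, 0 ⊨ φ_D for an SLTL model M = (Π, λ) and σ ∈ Π. For each i ∈ ℕ let B_i := {ψ ∈ cl(φ_D) | M, σ, i ⊨ ψ} and A_i := B_i ∩ P(φ_D). Then each B_i is s-elementary, and B₀B₁… is an accepting run of the generalised nondeterministic Büchi automaton A_{φ_D} on the word A₀A₁…. -/
/-! ### SLTL: syntax, models, satisfaction -/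

inductive SForm : Type where
  | var : ℕ → SForm
  | le : ℕ → ℕ → SForm
  | tru : SForm
  | fls : SForm
  | neg : SForm → SForm
  | conj : SForm → SForm → SForm
  | dia : ℕ → SForm → SForm
  | box : ℕ → SForm → SForm
  | next : SForm → SForm
  | until_ : SForm → SForm → SForm

/-- Traces: ω-sequences of propositional valuations. -/
abbrev Trace := ℕ → Set ℕ

/-- An SLTL model `(Π, λ)`; standpoint symbols are natural numbers, `0` is the
universal standpoint `*`. -/
structure SLTLModel where
  Pi : Set Trace
  lam : ℕ → Set Trace
  pi_nonempty : Pi.Nonempty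
  lam_sub : ∀ s, lam s ⊆ Pi
  lam_nonempty : ∀ s, (lam s).Nonempty
  lam_star : lam 0 = Pi

def SSat (M : SLTLModel) : SForm → Trace → ℕ → Prop
  | .var p, σ, i => p ∈ σ i
  | .le s s', _, _ => M.lam s ⊆ M.lam s'
  | .tru, _, _ => True
  | .fls, _, _ => False
  | .neg a, σ, i => ¬ SSat M a σ i
  | .conj a b, σ, i => SSat M a σ i ∧ SSat M b σ i
  | .dia s a, _, i => ∃ σ' ∈ M.lam s, SSat M a σ' i
  | .box s a, _, i => ∀ σ' ∈ M.lam s, SSat M a σ' i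
  | .next a, σ, i => SSat M a σ (i + 1)
  | .until_ a b, σ, i =>
      ∃ i', i ≤ i' ∧ SSat M b σ i' ∧ ∀ i'', i ≤ i'' → i'' < i' → SSat M a σ i''

def SLTLSatisfiable (φ : SForm) : Prop :=
  ∃ M : SLTLModel, ∃ σ ∈ M.Pi, SSat M φ σ 0

def SForm.impl (a b : SForm) : SForm := .neg (.conj a (.neg b))
def SForm.iffc (a b : SForm) : SForm := .conj (a.impl b) (b.impl a)
/-- `G φ := ¬(⊤ U ¬φ)`. -/
def SForm.G (a : SForm) : SForm := .neg (.until_ .tru (.neg a))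
def bigAnd (l : List SForm) : SForm := l.foldr .conj .tru
/-- The list `[a, a+1, …, b]`. -/
def listIcc (a b : ℕ) : List ℕ := (List.range (b + 1 - a)).map (fun k => a + k)

/-- Propositional variables occurring in a formula. -/
def varsSF : SForm → Finset ℕ
  | .var p => {p}
  | .le _ _ => ∅
  | .tru => ∅
  | .fls => ∅
  | .neg a => varsSF a
  | .conj a b => varsSF a ∪ varsSF b
  | .dia _ a => varsSF a
  | .box _ a => varsSF a
  | .next a => varsSF a
  | .until_ a b => varsSF a ∪ varsSF b

/-- Standpoint symbols occurring in a formula. -/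
def standsSF : SForm → Finset ℕ
  | .var _ => ∅
  | .le s s' => {s, s'}
  | .tru => ∅
  | .fls => ∅
  | .neg a => standsSF a
  | .conj a b => standsSF a ∪ standsSF b
  | .dia s a => insert s (standsSF a)
  | .box s a => insert s (standsSF a)
  | .next a => standsSF a
  | .until_ a b => standsSF a ∪ standsSF b

/-- No temporal connective (`X` or `U`) occurs in the formula. -/
def noTemp : SForm → Prop
  | .neg a => noTemp a
  | .conj a b => noTemp a ∧ noTemp b
  | .dia _ a => noTemp a
  | .box _ a => noTemp a
  | .next _ => False
  | .until_ _ _ => False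
  | _ => True

/-- The fragment LTL∨PSL: no temporal connective occurs within the scope of a
standpoint modality. -/
def isLTLPSL : SForm → Prop
  | .neg a => isLTLPSL a
  | .conj a b => isLTLPSL a ∧ isLTLPSL b
  | .dia _ a => noTemp a
  | .box _ a => noTemp a
  | .next a => isLTLPSL a
  | .until_ a b => isLTLPSL a ∧ isLTLPSL b
  | _ => True

def sizeSF : SForm → ℕ
  | .var _ => 1
  | .le _ _ => 1
  | .tru => 1
  | .fls => 1
  | .neg a => sizeSF a + 1
  | .conj a b => sizeSF a + sizeSF b + 1
  | .dia _ a => sizeSF a + 1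
  | .box _ a => sizeSF a + 1
  | .next a => sizeSF a + 1
  | .until_ a b => sizeSF a + sizeSF b + 1

/-! ### The formula `φ_D` for a partition `D = (I⁺, I⁻)` of the `≼`-subformulae -/

/-- The pairs `(s, s')` such that `s ≼ s'` is a subformula of the given formula. -/
def leSubs : SForm → Finset (ℕ × ℕ)
  | .var _ => ∅
  | .le s s' => {(s, s')}
  | .tru => ∅
  | .fls => ∅
  | .neg a => leSubs a
  | .conj a b => leSubs a ∪ leSubs b
  | .dia _ a => leSubs a
  | .box _ a => leSubs a
  | .next a => leSubs a
  | .until_ a b => leSubs a ∪ leSubs b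

/-- `φ[I⁺ ↦ ⊤, I⁻ ↦ ⊥]`: replace each subformula `s ≼ s'` with `(s,s') ∈ P`
by `⊤` and each with `(s,s') ∈ N` by `⊥`. -/
def substLe (P N : Finset (ℕ × ℕ)) : SForm → SForm
  | .var p => .var p
  | .le s s' => if (s, s') ∈ P then .tru else if (s, s') ∈ N then .fls else .le s s'
  | .tru => .tru
  | .fls => .fls
  | .neg a => .neg (substLe P N a)
  | .conj a b => .conj (substLe P N a) (substLe P N b)
  | .dia s a => .dia s (substLe P N a)
  | .box s a => .box s (substLe P N a)
  | .next a => .next (substLe P N a)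
  | .until_ a b => .until_ (substLe P N a) (substLe P N b)

/-- `ψ_D := G( ⋀_{(s≼s')∈I⁺} (s ≼ s') ∧ ⋀_{(s≼s')∈I⁻} (◇_s p_{s,s'} ∧ ¬◇_{s'} p_{s,s'}) )`,
where `pv (s,s')` is the fresh variable `p_{s,s'}`. -/
noncomputable def psiD (P N : Finset (ℕ × ℕ)) (pv : ℕ × ℕ → ℕ) : SForm :=
  SForm.G (.conj
    (bigAnd (P.toList.map (fun pr => SForm.le pr.1 pr.2)))
    (bigAnd (N.toList.map (fun pr =>
      SForm.conj (.dia pr.1 (.var (pv pr))) (.neg (.dia pr.2 (.var (pv pr))))))))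

/-- `φ_D := φ[I⁺ ↦ ⊤, I⁻ ↦ ⊥] ∧ ψ_D`. -/
noncomputable def phiD (φ : SForm) (P N : Finset (ℕ × ℕ)) (pv : ℕ × ℕ → ℕ) : SForm :=
  .conj (substLe P N φ) (psiD P N pv)

/-! ### The closure, s-elementary sets, and the generalised Büchi automaton -/

/-- Subformulae of a formula. -/
def subfs : SForm → Set SForm
  | .var p => {SForm.var p}
  | .le s s' => {SForm.le s s'}
  | .tru => {SForm.tru}
  | .fls => {SForm.fls}
  | .neg a => insert (SForm.neg a) (subfs a)
  | .conj a b => insert (SForm.conj a b) (subfs a ∪ subfs b)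
  | .dia s a => insert (SForm.dia s a) (subfs a)
  | .box s a => insert (SForm.box s a) (subfs a)
  | .next a => insert (SForm.next a) (subfs a)
  | .until_ a b => insert (SForm.until_ a b) (subfs a ∪ subfs b)

/-- Negation, identifying `¬¬ψ` with `ψ`. -/
def negId : SForm → SForm
  | .neg a => a
  | a => .neg a

/-- The closure `cl(φ)`: the smallest set containing all subformulae of `φ`,
`⊤` and `⊥`, closed under negation (identifying `¬¬ψ` with `ψ`), and
containing `X(ψ U ψ')` whenever `ψ U ψ'` is in it. -/
inductive Cl (φ : SForm) : SForm → Prop where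
  | base {ψ} : ψ ∈ subfs φ → Cl φ ψ
  | tru : Cl φ .tru
  | fls : Cl φ .fls
  | nc {ψ} : Cl φ ψ → Cl φ (negId ψ)
  | nextU {a b} : Cl φ (.until_ a b) → Cl φ (.next (.until_ a b))

/-- A PSL model with a finite nonempty set `W` of precisifications;
`Vs` is the valuation on standpoint symbols (with `0` the universal
standpoint `*`) and `Vp` the valuation on propositional variables. -/
structure PSLM (W : Type) where
  Vs : ℕ → Set W
  Vp : ℕ → Set W
  hfin : Finite W
  hne : Nonempty W
  hs : ∀ s, (Vs s).Nonempty
  hstar : Vs 0 = Set.univ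

/-- PSL satisfaction of an SLTL formula without temporal connectives
(the clauses for `X` and `U` are never used on PSL formulae). -/
def FSat {W : Type} (M : PSLM W) : SForm → W → Prop
  | .var p, π => π ∈ M.Vp p
  | .le s s', _ => M.Vs s ⊆ M.Vs s'
  | .tru, _ => True
  | .fls, _ => False
  | .neg a, π => ¬ FSat M a π
  | .conj a b, π => FSat M a π ∧ FSat M b π
  | .dia s a, _ => ∃ π' ∈ M.Vs s, FSat M a π'
  | .box s a, _ => ∀ π' ∈ M.Vs s, FSat M a π'
  | .next _, _ => False
  | .until_ _ _, _ => False

/-- `B` is standpoint-consistent: the conjunction of all PSL formulae in `B`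
is PSL-satisfiable. -/
def StandCons (B : Set SForm) : Prop :=
  ∃ (W : Type) (M : PSLM W) (π : W), ∀ ψ ∈ B, noTemp ψ → FSat M ψ π

/-- `B ⊆ cl(φ)` is maximally consistent. -/
def MaxCons (φ : SForm) (B : Set SForm) : Prop :=
  (∀ ψ ∈ B, Cl φ ψ) ∧ SForm.tru ∈ B ∧ SForm.fls ∉ B ∧
  (∀ ψ, Cl φ (.neg ψ) → (ψ ∈ B ↔ SForm.neg ψ ∉ B)) ∧
  (∀ a b, Cl φ (.conj a b) → (SForm.conj a b ∈ B ↔ a ∈ B ∧ b ∈ B)) ∧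
  (∀ a b, Cl φ (.until_ a b) →
    (SForm.until_ a b ∈ B ↔ b ∈ B ∨ (a ∈ B ∧ SForm.next (.until_ a b) ∈ B)))

/-- s-elementary: maximally consistent and standpoint-consistent. -/
def SElem (φ : SForm) (B : Set SForm) : Prop := MaxCons φ B ∧ StandCons B

/-- `B₀B₁…` is an accepting run of the generalised nondeterministic Büchi
automaton `A_φ` on the word `A₀A₁…`:  `B₀` is initial (`φ ∈ B₀`), every `Bᵢ`
is a state (s-elementary), `Aᵢ = Bᵢ ∩ P(φ)`, consecutive states respect the
transition relation, and every accepting set is visited infinitely often. -/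
def AcceptingRun (φ : SForm) (B : ℕ → Set SForm) (A : ℕ → Set ℕ) : Prop :=
  φ ∈ B 0 ∧ (∀ i, SElem φ (B i)) ∧
  (∀ i, A i = {p : ℕ | SForm.var p ∈ B i ∧ p ∈ varsSF φ}) ∧
  (∀ i ψ, Cl φ (.next ψ) → (SForm.next ψ ∈ B i ↔ ψ ∈ B (i + 1))) ∧
  (∀ a b, Cl φ (.until_ a b) → ∀ i, ∃ j, i ≤ j ∧ (SForm.until_ a b ∉ B j ∨ b ∈ B j))

/-- The language of `A_φ` is non-empty. -/
def LangNonempty (φ : SForm) : Prop :=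
  ∃ (B : ℕ → Set SForm) (A : ℕ → Set ℕ), AcceptingRun φ B A

/-!
The states `B_i` are read off from the model, so maximal consistency, the transition relation and
the acceptance condition are the semantic clauses of SLTL, together with the unfolding
`ψ U ψ' ↔ ψ' ∨ (ψ ∧ X (ψ U ψ'))` and the fact that `ψ U ψ'` eventually forces `ψ'`. The real work is
standpoint consistency: the temporal-free formulae of `cl(φ_D)` true at time `i` hold in the finite
PSL model obtained by filtering `Π` through the finite, subformula-closed set `cl(φ_D)`.
-/

@[simp]
theorem mem_subfs_self (ψ : SForm) : ψ ∈ subfs ψ := by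
  cases ψ <;> simp [subfs]

theorem subfs_subset_of_mem {φ ψ : SForm} (h : ψ ∈ subfs φ) : subfs ψ ⊆ subfs φ := by
  induction φ with
  | var | le | tru | fls => simp only [subfs, Set.mem_singleton_iff] at h; rw [h]
  | neg a ih | dia _ a ih | box _ a ih | next a ih =>
    rcases h with rfl | h
    · rfl
    · exact (ih h).trans (Set.subset_insert _ _)
  | conj a b iha ihb | until_ a b iha ihb =>
    rcases h with rfl | h | h
    · rfl
    · exact (iha h).trans (Set.subset_union_left.trans (Set.subset_insert _ _))
    · exact (ihb h).trans (Set.subset_union_right.trans (Set.subset_insert _ _))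

theorem subfs_finite (φ : SForm) : (subfs φ).Finite := by
  induction φ <;> simp [subfs, *]

theorem subfs_negId_subset (ψ : SForm) : subfs (negId ψ) ⊆ insert (negId ψ) (subfs ψ) := by
  cases ψ with
  | neg a => exact (Set.subset_insert _ _).trans (Set.subset_insert _ _)
  | _ => exact subset_rfl

theorem negId_mem_union_image_neg {U : Set SForm} (hU : ∀ a, .neg a ∈ U → a ∈ U) {ψ : SForm}
    (h : ψ ∈ U ∪ .neg '' U) : negId ψ ∈ U ∪ .neg '' U := by
  cases ψ with
  | neg a =>
    rcases h with h | ⟨b, hb, hba⟩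
    · exact Or.inl (hU a h)
    · cases hba; exact Or.inl hb
  | _ =>
    rcases h with h | ⟨b, -, hb⟩
    · exact Or.inr ⟨_, h, rfl⟩
    · cases hb

namespace Cl

variable {φ ψ χ : SForm}

theorem subfs_subset (h : Cl φ ψ) : subfs ψ ⊆ {χ | Cl φ χ} := by
  induction h with
  | base hb => exact fun χ hχ => Cl.base (subfs_subset_of_mem hb hχ)
  | tru => simp [subfs, Cl.tru]
  | fls => simp [subfs, Cl.fls]
  | nc h ih =>
    intro χ hχ
    rcases subfs_negId_subset _ hχ with rfl | hχ
    exacts [Cl.nc h, ih hχ]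
  | nextU h ih =>
    rintro χ (rfl | hχ)
    exacts [Cl.nextU h, ih hχ]

theorem of_mem_subfs (h : Cl φ ψ) (hχ : χ ∈ subfs ψ) : Cl φ χ :=
  h.subfs_subset hχ

/-- Every member of `cl(φ)` is a subformula of `φ`, `⊤`, `⊥`, `X` of one of these, or the
negation of one of these. -/
theorem finite (φ : SForm) : {ψ | Cl φ ψ}.Finite := by
  set S : Set SForm := insert .tru (insert .fls (subfs φ))
  set U : Set SForm := S ∪ .next '' S
  have hS : S.Finite := ((subfs_finite φ).insert _).insert _
  have hU : ∀ a, .neg a ∈ U → a ∈ U := by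
    rintro a ((h | h | h) | ⟨b, -, hb⟩)
    · cases h
    · cases h
    · exact Or.inl (Or.inr (Or.inr (subfs_subset_of_mem h (by simp [subfs]))))
    · cases hb
  have hUfin : U.Finite := hS.union (hS.image _)
  refine (hUfin.union (hUfin.image SForm.neg)).subset fun ψ h => ?_
  induction h with
  | base hb => exact Or.inl (Or.inl (Or.inr (Or.inr hb)))
  | tru => exact Or.inl (Or.inl (Or.inl rfl))
  | fls => exact Or.inl (Or.inl (Or.inr (Or.inl rfl)))
  | nc _ ih => exact negId_mem_union_image_neg hU ih
  | nextU _ ih =>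
    rcases ih with ((h | h | h) | ⟨b, -, hb⟩) | ⟨b, -, hb⟩
    · cases h
    · cases h
    · exact Or.inl (Or.inr ⟨_, Or.inr (Or.inr h), rfl⟩)
    · cases hb
    · cases hb

end Cl

theorem sSat_until_iff (M : SLTLModel) (a b : SForm) (σ : Trace) (i : ℕ) :
    SSat M (.until_ a b) σ i ↔
      SSat M b σ i ∨ (SSat M a σ i ∧ SSat M (.until_ a b) σ (i + 1)) := by
  constructor
  · rintro ⟨j, hij, hb, ha⟩
    rcases hij.eq_or_lt with rfl | hlt
    · exact Or.inl hb
    · exact Or.inr ⟨ha i le_rfl hlt, j, hlt, hb, fun k hk hkj => ha k (by omega) hkj⟩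
  · rintro (hb | ⟨ha, j, hij, hb, ha'⟩)
    · exact ⟨i, le_rfl, hb, fun k hk hki => absurd hki (by omega)⟩
    · refine ⟨j, by omega, hb, fun k hk hkj => ?_⟩
      rcases hk.eq_or_lt with rfl | hlt
      exacts [ha, ha' k hlt hkj]

section Filtration

variable (M : SLTLModel) (K : Set SForm) (i : ℕ)

/-- Traces are identified when they agree on the formulae of `K` at time `i` and on membership in
the standpoints occurring in `K`; the second component is what makes `s ≼ s'` hold in the
filtration exactly when it holds in `M`. -/
def filtrationType (τ : Trace) : Set SForm × Set ℕ :=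
  ({ψ | ψ ∈ K ∧ SSat M ψ τ i}, {s | s ∈ ⋃ ψ ∈ K, (standsSF ψ : Set ℕ) ∧ τ ∈ M.lam s})

abbrev FiltrationWorld : Type := ↥(filtrationType M K i '' M.Pi)

def FiltrationWorld.of {τ : Trace} (hτ : τ ∈ M.Pi) : FiltrationWorld M K i :=
  ⟨filtrationType M K i τ, τ, hτ, rfl⟩

variable {K}

def filtration (hK : K.Finite) : PSLM (FiltrationWorld M K i) where
  Vs s := {w | w.1 ∈ filtrationType M K i '' M.lam s}
  Vp p := {w | .var p ∈ w.1.1}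
  hfin := by
    refine Set.Finite.to_subtype ((hK.finite_subsets.prod
      (hK.biUnion fun ψ _ => (standsSF ψ).finite_toSet).finite_subsets).subset ?_)
    rintro _ ⟨τ, -, rfl⟩
    exact ⟨fun ψ h => h.1, fun s h => h.1⟩
  hne := ⟨FiltrationWorld.of M K i M.pi_nonempty.some_mem⟩
  hs s := ⟨FiltrationWorld.of M K i (M.lam_sub s (M.lam_nonempty s).some_mem),
    _, (M.lam_nonempty s).some_mem, rfl⟩
  hstar := by
    ext ⟨_, τ, hτ, rfl⟩
    simp only [Set.mem_ofPred_eq, Set.mem_univ, iff_true, M.lam_star]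
    exact ⟨τ, hτ, rfl⟩

theorem mem_filtration_Vs (hK : K.Finite) {s : ℕ} {w : FiltrationWorld M K i} :
    w ∈ (filtration M i hK).Vs s ↔
      ∃ τ, ∃ hτ : τ ∈ M.lam s, w = FiltrationWorld.of M K i (M.lam_sub s hτ) := by
  constructor
  · rintro ⟨τ, hτ, hw⟩
    exact ⟨τ, hτ, Subtype.ext hw.symm⟩
  · rintro ⟨τ, hτ, rfl⟩
    exact ⟨τ, hτ, rfl⟩

theorem filtration_Vs_subset_iff (hK : K.Finite) {s s' : ℕ} (hψ : .le s s' ∈ K) :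
    (filtration M i hK).Vs s ⊆ (filtration M i hK).Vs s' ↔ M.lam s ⊆ M.lam s' := by
  refine ⟨fun h τ hτ => ?_, fun h w hw => Set.image_mono h hw⟩
  have hw : FiltrationWorld.of M K i (M.lam_sub s hτ) ∈ (filtration M i hK).Vs s := ⟨τ, hτ, rfl⟩
  obtain ⟨τ', hτ', hττ'⟩ := h hw
  have hs' : s' ∈ (filtrationType M K i τ').2 :=
    ⟨Set.mem_biUnion hψ (by simp [standsSF]), hτ'⟩
  rw [hττ'] at hs'
  exact hs'.2

theorem fSat_filtration_iff (hK : K.Finite) (hsub : ∀ ψ ∈ K, subfs ψ ⊆ K) {ψ : SForm}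
    (hψ : ψ ∈ K) (ht : noTemp ψ) {τ : Trace} (hτ : τ ∈ M.Pi) :
    FSat (filtration M i hK) ψ (FiltrationWorld.of M K i hτ) ↔ SSat M ψ τ i := by
  induction ψ generalizing τ with
  | var p => exact and_iff_right hψ
  | le s s' => exact filtration_Vs_subset_iff M i hK hψ
  | tru | fls => rfl
  | neg a ih => exact not_congr (ih (hsub _ hψ (by simp [subfs])) ht hτ)
  | conj a b iha ihb =>
    exact and_congr (iha (hsub _ hψ (by simp [subfs])) ht.1 hτ)
      (ihb (hsub _ hψ (by simp [subfs])) ht.2 hτ)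
  | dia s a ih =>
    have ha : a ∈ K := hsub _ hψ (by simp [subfs])
    simp only [FSat, SSat, mem_filtration_Vs]
    constructor
    · rintro ⟨_, ⟨τ', hτ', rfl⟩, h⟩
      exact ⟨τ', hτ', (ih ha ht _).1 h⟩
    · rintro ⟨τ', hτ', h⟩
      exact ⟨_, ⟨τ', hτ', rfl⟩, (ih ha ht _).2 h⟩
  | box s a ih =>
    have ha : a ∈ K := hsub _ hψ (by simp [subfs])
    simp only [FSat, SSat, mem_filtration_Vs]
    constructor
    · intro h τ' hτ'
      exact (ih ha ht _).1 (h _ ⟨τ', hτ', rfl⟩)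
    · rintro h _ ⟨τ', hτ', rfl⟩
      exact (ih ha ht _).2 (h τ' hτ')
  | next | until_ => exact ht.elim

theorem standCons_of_finite (hK : K.Finite) (hsub : ∀ ψ ∈ K, subfs ψ ⊆ K) {σ : Trace}
    (hσ : σ ∈ M.Pi) : StandCons {ψ | ψ ∈ K ∧ SSat M ψ σ i} :=
  ⟨_, filtration M i hK, FiltrationWorld.of M K i hσ,
    fun _ hψ ht => (fSat_filtration_iff M i hK hsub hψ.1 ht hσ).2 hψ.2⟩

end Filtration

section TruthSets

variable (M : SLTLModel) (Φ : SForm)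

/-- The state `B_i` of the run. -/
def truthSet (σ : Trace) (i : ℕ) : Set SForm := {ψ | Cl Φ ψ ∧ SSat M ψ σ i}

theorem maxCons_truthSet (σ : Trace) (i : ℕ) : MaxCons Φ (truthSet M Φ σ i) := by
  refine ⟨fun _ h => h.1, ⟨.tru, trivial⟩, fun h => h.2, fun ψ hc => ?_, fun a b hc => ?_,
    fun a b hc => ?_⟩
  · have hψ : Cl Φ ψ := hc.of_mem_subfs (by simp [subfs])
    simp only [truthSet, Set.mem_ofPred_eq, SSat, hψ, hc, true_and, not_not]
  · have ha : Cl Φ a := hc.of_mem_subfs (by simp [subfs])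
    have hb : Cl Φ b := hc.of_mem_subfs (by simp [subfs])
    simp only [truthSet, Set.mem_ofPred_eq, SSat, ha, hb, hc, true_and]
  · have ha : Cl Φ a := hc.of_mem_subfs (by simp [subfs])
    have hb : Cl Φ b := hc.of_mem_subfs (by simp [subfs])
    simp only [truthSet, Set.mem_ofPred_eq, ha, hb, hc, hc.nextU, true_and, SSat]
    exact sSat_until_iff M a b σ i

theorem sElem_truthSet {σ : Trace} (hσ : σ ∈ M.Pi) (i : ℕ) : SElem Φ (truthSet M Φ σ i) :=
  ⟨maxCons_truthSet M Φ σ i, standCons_of_finite M i (Cl.finite Φ)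
    (fun _ hψ => hψ.subfs_subset) hσ⟩

theorem acceptingRun_truthSet {σ : Trace} (hσ : σ ∈ M.Pi) (hsat : SSat M Φ σ 0) :
    AcceptingRun Φ (truthSet M Φ σ)
      (fun i => {p | .var p ∈ truthSet M Φ σ i ∧ p ∈ varsSF Φ}) := by
  refine ⟨⟨.base (mem_subfs_self Φ), hsat⟩, sElem_truthSet M Φ hσ, fun _ => rfl,
    fun i ψ hc => ?_, fun a b hc i => ?_⟩
  · have hψ : Cl Φ ψ := hc.of_mem_subfs (by simp [subfs])
    simp only [truthSet, Set.mem_ofPred_eq, hψ, hc, true_and, SSat]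
  · by_cases hu : SSat M (.until_ a b) σ i
    · obtain ⟨j, hij, hb, -⟩ := hu
      exact ⟨j, hij, Or.inr ⟨hc.of_mem_subfs (by simp [subfs]), hb⟩⟩
    · exact ⟨i, le_rfl, Or.inl fun h => hu h.2⟩

end TruthSets

theorem stmt18_general (φ : SForm) (pv : ℕ × ℕ → ℕ) (P N : Finset (ℕ × ℕ))
    (M : SLTLModel) (σ : Trace) (hσ : σ ∈ M.Pi)
    (hsat : SSat M (phiD φ P N pv) σ 0) :
    (∀ i, SElem (phiD φ P N pv) {ψ | Cl (phiD φ P N pv) ψ ∧ SSat M ψ σ i}) ∧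
    AcceptingRun (phiD φ P N pv)
      (fun i => {ψ | Cl (phiD φ P N pv) ψ ∧ SSat M ψ σ i})
      (fun i => {p : ℕ |
        SForm.var p ∈ {ψ | Cl (phiD φ P N pv) ψ ∧ SSat M ψ σ i} ∧
        p ∈ varsSF (phiD φ P N pv)}) :=
  ⟨sElem_truthSet M _ hσ, acceptingRun_truthSet M _ hσ hsat⟩

/-- If `M, σ, 0 ⊨ φ_D`, then the sets
`B_i := {ψ ∈ cl(φ_D) | M, σ, i ⊨ ψ}` are s-elementary and `B₀B₁…` is an
accepting run of `A_{φ_D}` on the word `A₀A₁…` with `A_i := B_i ∩ P(φ_D)`. -/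
theorem stmt18 (φ : SForm) (pv : ℕ × ℕ → ℕ) (P N : Finset (ℕ × ℕ))
    (hφ : isLTLPSL φ) (hinj : Function.Injective pv)
    (hfresh : ∀ pr, pv pr ∉ varsSF φ)
    (hpart : P ∪ N = leSubs φ) (hdisj : Disjoint P N)
    (M : SLTLModel) (σ : Trace) (hσ : σ ∈ M.Pi)
    (hsat : SSat M (phiD φ P N pv) σ 0) :
    (∀ i, SElem (phiD φ P N pv) {ψ | Cl (phiD φ P N pv) ψ ∧ SSat M ψ σ i}) ∧
    AcceptingRun (phiD φ P N pv)
      (fun i => {ψ | Cl (phiD φ P N pv) ψ ∧ SSat M ψ σ i})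
      (fun i => {p : ℕ |
        SForm.var p ∈ {ψ | Cl (phiD φ P N pv) ψ ∧ SSat M ψ σ i} ∧
        p ∈ varsSF (phiD φ P N pv)}) :=
  stmt18_general φ pv P N M σ hσ hsat
end

section
/- Let φ₁ ∧ φ₂ be a PSL formula where φ₁ is a conjunction of formulae of the form s ≼ s' that includes * ≼ *, and φ₂ is a PSL formula in negation normal form with no occurrence of ≼. If φ₁ ∧ φ₂ is PSL-satisfiable, then there exist a PSL model M = (Π, V) and a precisification π ∈ Π such that M, π ⊨ φ₁ ∧ φ₂ and {s a standpoint symbol of φ₁ ∧ φ₂ | π ∈ V(s)} = S*, where S* = R(*). -/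
/-! ### Propositional standpoint logic PSL -/

inductive PSForm : Type where
  | var : ℕ → PSForm
  | le : ℕ → ℕ → PSForm
  | neg : PSForm → PSForm
  | conj : PSForm → PSForm → PSForm
  | disj : PSForm → PSForm → PSForm
  | dia : ℕ → PSForm → PSForm
  | box : ℕ → PSForm → PSForm

def PSLSat {W : Type} (M : PSLM W) : PSForm → W → Prop
  | .var p, π => π ∈ M.Vp p
  | .le s s', _ => M.Vs s ⊆ M.Vs s'
  | .neg a, π => ¬ PSLSat M a π
  | .conj a b, π => PSLSat M a π ∧ PSLSat M b π
  | .disj a b, π => PSLSat M a π ∨ PSLSat M b π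
  | .dia s a, _ => ∃ π' ∈ M.Vs s, PSLSat M a π'
  | .box s a, _ => ∀ π' ∈ M.Vs s, PSLSat M a π'

def PSLSatisfiable (φ : PSForm) : Prop :=
  ∃ (W : Type) (M : PSLM W) (π : W), PSLSat M φ π

/-- Standpoint symbols mentioned in a formula. -/
def standsP : PSForm → Finset ℕ
  | .var _ => ∅
  | .le s s' => {s, s'}
  | .neg a => standsP a
  | .conj a b => standsP a ∪ standsP b
  | .disj a b => standsP a ∪ standsP b
  | .dia s a => insert s (standsP a)
  | .box s a => insert s (standsP a)

/-- Number of occurrences of the `◇_s` modalities. -/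
def diaCount : PSForm → ℕ
  | .var _ => 0
  | .le _ _ => 0
  | .neg a => diaCount a
  | .conj a b => diaCount a + diaCount b
  | .disj a b => diaCount a + diaCount b
  | .dia _ a => diaCount a + 1
  | .box _ a => diaCount a

/-- Pairs `(s, s')` such that `s ≼ s'` occurs in the formula. -/
def lePairsP : PSForm → Finset (ℕ × ℕ)
  | .var _ => ∅
  | .le s s' => {(s, s')}
  | .neg a => lePairsP a
  | .conj a b => lePairsP a ∪ lePairsP b
  | .disj a b => lePairsP a ∪ lePairsP b
  | .dia _ a => lePairsP a
  | .box _ a => lePairsP a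

/-- The formula is a conjunction of formulae of the form `s ≼ s'`. -/
def isLeConj : PSForm → Prop
  | .le _ _ => True
  | .conj a b => isLeConj a ∧ isLeConj b
  | _ => False

/-- Negation normal form with no occurrence of `≼`: negation is applied only
to propositional variables. -/
def IsNNF : PSForm → Prop
  | .var _ => True
  | .neg (.var _) => True
  | .neg _ => False
  | .le _ _ => False
  | .conj a b => IsNNF a ∧ IsNNF b
  | .disj a b => IsNNF a ∧ IsNNF b
  | .dia _ a => IsNNF a
  | .box _ a => IsNNF a

/-- The base relation whose reflexive-transitive closure is `R`:
`{(s,s') | s ≼ s' occurs in φ₁} ∪ {(s,*) | s a standpoint symbol of φ₁ ∧ φ₂}`. -/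
def baseRel (φ₁ φ₂ : PSForm) (a b : ℕ) : Prop :=
  (a, b) ∈ lePairsP φ₁ ∨ (a ∈ standsP (φ₁.conj φ₂) ∧ b = 0)

/-- `R(s) = {s' | (s, s') ∈ R}`. -/
def Rset (φ₁ φ₂ : PSForm) (s : ℕ) : Set ℕ :=
  {s' | Relation.ReflTransGen (baseRel φ₁ φ₂) s s'}

/-- `𝕊 = {R(s) | s a standpoint symbol of φ₁ ∧ φ₂}`. -/
def SSfam (φ₁ φ₂ : PSForm) : Set (Set ℕ) :=
  Rset φ₁ φ₂ '' ↑(standsP (φ₁.conj φ₂))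


/-- No occurrence of `≼`. -/
def NoLe : PSForm → Prop
  | .var _ => True
  | .le _ _ => False
  | .neg a => NoLe a
  | .conj a b => NoLe a ∧ NoLe b
  | .disj a b => NoLe a ∧ NoLe b
  | .dia _ a => NoLe a
  | .box _ a => NoLe a

lemma nnf_noLe : ∀ φ, IsNNF φ → NoLe φ
  | .var _, _ => trivial
  | .neg (.var _), _ => trivial
  | .conj a b, h => ⟨nnf_noLe a h.1, nnf_noLe b h.2⟩
  | .disj a b, h => ⟨nnf_noLe a h.1, nnf_noLe b h.2⟩
  | .dia _ a, h => nnf_noLe a h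
  | .box _ a, h => nnf_noLe a h

lemma sat_transfer {W : Type} (M : PSLM W) (M' : PSLM (Option W)) (π : W)
    (hVp : ∀ p o, o ∈ M'.Vp p ↔ o.getD π ∈ M.Vp p)
    (hVsmem : ∀ s (o : Option W), o ∈ M'.Vs s → o.getD π ∈ M.Vs s)
    (hVsin : ∀ s (w : W), w ∈ M.Vs s → some w ∈ M'.Vs s) :
    ∀ φ, NoLe φ → ∀ o, PSLSat M' φ o ↔ PSLSat M φ (o.getD π)
  | .var p, _, o => hVp p o
  | .neg a, h, o => by
      simp only [PSLSat]
      exact not_congr (sat_transfer M M' π hVp hVsmem hVsin a h o)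
  | .conj a b, h, o => by
      simp only [PSLSat]
      exact and_congr (sat_transfer M M' π hVp hVsmem hVsin a h.1 o)
        (sat_transfer M M' π hVp hVsmem hVsin b h.2 o)
  | .disj a b, h, o => by
      simp only [PSLSat]
      exact or_congr (sat_transfer M M' π hVp hVsmem hVsin a h.1 o)
        (sat_transfer M M' π hVp hVsmem hVsin b h.2 o)
  | .dia s a, h, o => by
      simp only [PSLSat]
      constructor
      · rintro ⟨o', ho', ha⟩
        exact ⟨o'.getD π, hVsmem s o' ho',
          (sat_transfer M M' π hVp hVsmem hVsin a h o').mp ha⟩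
      · rintro ⟨w, hw, ha⟩
        exact ⟨some w, hVsin s w hw,
          (sat_transfer M M' π hVp hVsmem hVsin a h (some w)).mpr ha⟩
  | .box s a, h, o => by
      simp only [PSLSat]
      constructor
      · intro H w hw
        exact (sat_transfer M M' π hVp hVsmem hVsin a h (some w)).mp
          (H (some w) (hVsin s w hw))
      · intro H o' ho'
        exact (sat_transfer M M' π hVp hVsmem hVsin a h o').mpr
          (H _ (hVsmem s o' ho'))

lemma lePairs_of_sat {W : Type} (M : PSLM W) :
    ∀ φ, isLeConj φ → ∀ w, PSLSat M φ w →
      ∀ a b, (a, b) ∈ lePairsP φ → M.Vs a ⊆ M.Vs b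
  | .le s s', _, w, hsat, a, b, hab => by
      simp only [lePairsP, Finset.mem_singleton, Prod.mk.injEq] at hab
      obtain ⟨rfl, rfl⟩ := hab
      exact hsat
  | .conj u v, h, w, hsat, a, b, hab => by
      simp only [lePairsP, Finset.mem_union] at hab
      rcases hab with hab | hab
      · exact lePairs_of_sat M u h.1 w hsat.1 a b hab
      · exact lePairs_of_sat M v h.2 w hsat.2 a b hab

lemma sat_of_lePairs {W : Type} (M : PSLM W) :
    ∀ φ, isLeConj φ →
      (∀ a b, (a, b) ∈ lePairsP φ → M.Vs a ⊆ M.Vs b) →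
      ∀ w, PSLSat M φ w
  | .le s s', _, h, w => h s s' (by simp [lePairsP])
  | .conj u v, hc, h, w =>
      ⟨sat_of_lePairs M u hc.1
        (fun a b hab => h a b (by simp [lePairsP, hab])) w,
       sat_of_lePairs M v hc.2
        (fun a b hab => h a b (by simp [lePairsP, hab])) w⟩

lemma lePairs_mem_stands :
    ∀ φ a b, (a, b) ∈ lePairsP φ → a ∈ standsP φ ∧ b ∈ standsP φ
  | .le s s', a, b, hab => by
      simp only [lePairsP, Finset.mem_singleton, Prod.mk.injEq] at hab
      obtain ⟨rfl, rfl⟩ := hab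
      simp [standsP]
  | .conj u v, a, b, hab => by
      simp only [lePairsP, Finset.mem_union] at hab
      simp only [standsP, Finset.mem_union]
      rcases hab with hab | hab
      · exact ⟨Or.inl (lePairs_mem_stands u a b hab).1,
          Or.inl (lePairs_mem_stands u a b hab).2⟩
      · exact ⟨Or.inr (lePairs_mem_stands v a b hab).1,
          Or.inr (lePairs_mem_stands v a b hab).2⟩
  | .disj u v, a, b, hab => by
      simp only [lePairsP, Finset.mem_union] at hab
      simp only [standsP, Finset.mem_union]
      rcases hab with hab | hab
      · exact ⟨Or.inl (lePairs_mem_stands u a b hab).1,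
          Or.inl (lePairs_mem_stands u a b hab).2⟩
      · exact ⟨Or.inr (lePairs_mem_stands v a b hab).1,
          Or.inr (lePairs_mem_stands v a b hab).2⟩
  | .neg u, a, b, hab => lePairs_mem_stands u a b hab
  | .dia s u, a, b, hab => by
      have := lePairs_mem_stands u a b hab
      simp only [standsP, Finset.mem_insert]
      exact ⟨Or.inr this.1, Or.inr this.2⟩
  | .box s u, a, b, hab => by
      have := lePairs_mem_stands u a b hab
      simp only [standsP, Finset.mem_insert]
      exact ⟨Or.inr this.1, Or.inr this.2⟩
  | .var _, a, b, hab => by simp [lePairsP] at hab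

/-- If `φ₁ ∧ φ₂` (with `φ₁` a conjunction of `≼`-formulae
including `* ≼ *` and `φ₂` in negation normal form without `≼`) is
PSL-satisfiable, then it is satisfied at a precisification `π` of some PSL
model whose set of standpoint symbols labelling `π` is exactly `S* = R(*)`. -/
theorem stmt19 (φ₁ φ₂ : PSForm) (h₁ : isLeConj φ₁)
    (hstar : ((0 : ℕ), (0 : ℕ)) ∈ lePairsP φ₁) (h₂ : IsNNF φ₂)
    (hsat : PSLSatisfiable (φ₁.conj φ₂)) :
    ∃ (W : Type) (M : PSLM W) (π : W),
      PSLSat M (φ₁.conj φ₂) π ∧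
      {s : ℕ | s ∈ standsP (φ₁.conj φ₂) ∧ π ∈ M.Vs s} = Rset φ₁ φ₂ 0 := by
  classical
  obtain ⟨W, M, π, hsatM⟩ := hsat
  have hsat1 : PSLSat M φ₁ π := hsatM.1
  have hsat2 : PSLSat M φ₂ π := hsatM.2
  have hpairs : ∀ a b, (a, b) ∈ lePairsP φ₁ → M.Vs a ⊆ M.Vs b :=
    lePairs_of_sat M φ₁ h₁ π hsat1
  -- every symbol in R(*) has universal extension in M
  have huniv : ∀ s ∈ Rset φ₁ φ₂ 0, M.Vs s = Set.univ := by
    intro s hs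
    induction hs with
    | refl => exact M.hstar
    | tail h₁' h₂' ih =>
      rcases h₂' with hp | ⟨_, rfl⟩
      · exact Set.eq_univ_of_univ_subset (ih ▸ hpairs _ _ hp)
      · exact M.hstar
  -- every symbol in R(*) is a standpoint symbol of the formula
  have hstands : ∀ s ∈ Rset φ₁ φ₂ 0, s ∈ standsP (φ₁.conj φ₂) := by
    intro s hs
    induction hs with
    | refl =>
      have := (lePairs_mem_stands φ₁ 0 0 hstar).1
      simp only [standsP, Finset.mem_union]
      exact Or.inl this
    | tail h₁' h₂' ih =>
      rcases h₂' with hp | ⟨_, rfl⟩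
      · have := (lePairs_mem_stands φ₁ _ _ hp).2
        simp only [standsP, Finset.mem_union]
        exact Or.inl this
      · have := (lePairs_mem_stands φ₁ 0 0 hstar).1
        simp only [standsP, Finset.mem_union]
        exact Or.inl this
  -- the new model on `Option W`
  haveI := M.hfin
  haveI := M.hne
  refine ⟨Option W,
    { Vs := fun s => {o | (s ∈ Rset φ₁ φ₂ 0 ∧ o.getD π ∈ M.Vs s) ∨
        ∃ w ∈ M.Vs s, o = some w}
      Vp := fun p => {o | o.getD π ∈ M.Vp p}
      hfin := by
          haveI := M.hfin
          exact Finite.of_equiv _ (Equiv.optionEquivSumPUnit.{0,0} W).symm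
      hne := ⟨none⟩
      hs := fun s => by
        obtain ⟨w, hw⟩ := M.hs s
        exact ⟨some w, Or.inr ⟨w, hw, rfl⟩⟩
      hstar := by
        ext o
        simp only [Set.mem_setOf_eq, Set.mem_univ, iff_true]
        exact Or.inl ⟨Relation.ReflTransGen.refl, M.hstar ▸ Set.mem_univ _⟩ },
    none, ?_, ?_⟩
  · set M' : PSLM (Option W) :=
      { Vs := fun s => {o | (s ∈ Rset φ₁ φ₂ 0 ∧ o.getD π ∈ M.Vs s) ∨
          ∃ w ∈ M.Vs s, o = some w}
        Vp := fun p => {o | o.getD π ∈ M.Vp p}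
        hfin := by
          haveI := M.hfin
          exact Finite.of_equiv _ (Equiv.optionEquivSumPUnit.{0,0} W).symm
        hne := ⟨none⟩
        hs := fun s => by
          obtain ⟨w, hw⟩ := M.hs s
          exact ⟨some w, Or.inr ⟨w, hw, rfl⟩⟩
        hstar := by
          ext o
          simp only [Set.mem_setOf_eq, Set.mem_univ, iff_true]
          exact Or.inl ⟨Relation.ReflTransGen.refl, M.hstar ▸ Set.mem_univ _⟩ }
        with hM'
    constructor
    · -- φ₁ holds in M'
      refine sat_of_lePairs M' φ₁ h₁ ?_ none
      intro a b hab o ho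
      rcases ho with ⟨haR, hmem⟩ | ⟨w, hw, rfl⟩
      · exact Or.inl ⟨haR.tail (Or.inl hab), hpairs a b hab hmem⟩
      · exact Or.inr ⟨w, hpairs a b hab hw, rfl⟩
    · -- φ₂ holds at `none` in M'
      have := sat_transfer M M' π (fun p o => Iff.rfl)
        (fun s o ho => by
          rcases ho with ⟨_, hmem⟩ | ⟨w, hw, rfl⟩
          · exact hmem
          · exact hw)
        (fun s w hw => Or.inr ⟨w, hw, rfl⟩)
        φ₂ (nnf_noLe φ₂ h₂) none
      exact this.mpr hsat2
  · -- the labelling set equals R(*)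
    ext s
    simp only [Set.mem_setOf_eq]
    constructor
    · rintro ⟨hsstand, hmem⟩
      rcases hmem with ⟨hR, _⟩ | ⟨w, _, h⟩
      · exact hR
      · exact absurd h (by simp)
    · intro hR
      refine ⟨hstands s hR, Or.inl ⟨hR, ?_⟩⟩
      rw [huniv s hR]; trivial
end
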